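/- Let D be a nonempty set, R ⊆ D nonempty, f : D → ℝ bounded above, Δ > 0, M := sup_{x ∈ R} f(x), and define f̃(x) = f(x) for x ∈ R and f̃(x) = min(f(x), M - Δ) for x ∉ R. Then for every Δ' with 0 < Δ' < Δ, any point x ∈ D with f̃(x) ≥ sup_{y ∈ D} f̃(y) - Δ' satisfies x ∈ R and f̃(x) = f(x). -/
import Mathlib


open scoped Classical in
theorem stmt_3 {D : Type*} [Nonempty D] (R : Set D) (hR : R.Nonempty)
    (f : D → ℝ) (hbdd : BddAbove (Set.range f)) (Δ : ℝ) (hΔ : 0 < Δ)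
    (M : ℝ) (hM : M = sSup (f '' R))
    (ftilde : D → ℝ)
    (hft : ∀ x, ftilde x = if x ∈ R then f x else min (f x) (M - Δ)) :
    ∀ Δ' : ℝ, 0 < Δ' → Δ' < Δ →
      ∀ x : D, (⨆ y : D, ftilde y) - Δ' ≤ ftilde x → x ∈ R ∧ ftilde x = f x := by
  intro Δ' hΔ'0 hΔ'Δ x hx
  obtain ⟨B, hB⟩ := hbdd
  have hBmem : ∀ y, f y ≤ B := fun y => hB ⟨y, rfl⟩
  have himgbdd : BddAbove (f '' R) := ⟨B, fun z ⟨y, _, hy⟩ => hy ▸ hBmem y⟩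
  have himgne : (f '' R).Nonempty := hR.image f
  have hfM : ∀ y ∈ R, f y ≤ M := fun y hy => hM ▸ le_csSup himgbdd ⟨y, hy, rfl⟩
  have hftle : ∀ y, ftilde y ≤ M := by
    intro y
    rw [hft y]
    split_ifs with h
    · exact hfM y h
    · exact le_trans (min_le_right _ _) (by linarith)
  have hftbdd : BddAbove (Set.range ftilde) := ⟨M, fun z ⟨y, hy⟩ => hy ▸ hftle y⟩
  have hsup_le : (⨆ y : D, ftilde y) ≤ M := ciSup_le hftle
  have hM_le : M ≤ ⨆ y : D, ftilde y := by
    rw [hM]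
    apply csSup_le himgne
    rintro z ⟨y, hy, rfl⟩
    have : ftilde y = f y := by rw [hft y, if_pos hy]
    exact this ▸ le_ciSup hftbdd y
  have hsup : (⨆ y : D, ftilde y) = M := le_antisymm hsup_le hM_le
  have hxR : x ∈ R := by
    by_contra h
    have h1 : ftilde x ≤ M - Δ := by
      rw [hft x, if_neg h]; exact min_le_right _ _
    rw [hsup] at hx
    linarith
  exact ⟨hxR, by rw [hft x, if_pos hxR]⟩
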